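/- arXiv:1703.09965 — 2 statements merged into one kernel-verified Lean document; each statement's English description precedes it below -/
import Mathlib

section
/- Let p ≥ 2 be an integer and r a real number with 0 < r < 1. For any vector w' ∈ ℝ^p, let w ∈ ℝ^p be its componentwise absolute value, wᵢ = |w'ᵢ|. Then Q(w,r) ≤ Q(w',r); that is, replacing a weight vector by the vector of its absolute values never increases the variance of the corresponding group effect estimator, so the subclass of nonnegative-weight effects contains all effects of the class of normalized group effects that can be most accurately estimated. -/
open Matrix

/-- The `p × p` Gram/correlation matrix of a uniform model at multicollinearity
level `r`: diagonal entries `1`, off-diagonal entries `r`. -/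
noncomputable def unifMat (p : ℕ) (r : ℝ) : Matrix (Fin p) (Fin p) ℝ :=
  fun i j => if i = j then 1 else r

/-- `Q(w,r) = wᵀ A(p,r)⁻¹ w`. -/
noncomputable def Qform (p : ℕ) (r : ℝ) (w : Fin p → ℝ) : ℝ :=
  w ⬝ᵥ (unifMat p r)⁻¹.mulVec w

/-- Explicit inverse candidate for `unifMat`. -/
noncomputable def uB (p : ℕ) (r : ℝ) : Matrix (Fin p) (Fin p) ℝ :=
  fun i j => if i = j then (1 + ((p : ℝ) - 2) * r) / ((1 - r) * (1 + ((p : ℝ) - 1) * r))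
             else -r / ((1 - r) * (1 + ((p : ℝ) - 1) * r))

lemma unif_denom_pos (p : ℕ) (r : ℝ) (hp : 2 ≤ p) (hr0 : 0 < r) (hr1 : r < 1) :
    0 < (1 - r) * (1 + ((p : ℝ) - 1) * r) := by
  have h2 : (2 : ℝ) ≤ (p : ℝ) := by exact_mod_cast hp
  have h3 : 0 < 1 + ((p : ℝ) - 1) * r := by nlinarith
  have h4 : 0 < 1 - r := by linarith
  exact mul_pos h4 h3

lemma unifMat_mul_uB (p : ℕ) (r : ℝ) (hp : 2 ≤ p) (hr0 : 0 < r) (hr1 : r < 1) :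
    unifMat p r * uB p r = 1 := by
  have hs := unif_denom_pos p r hp hr0 hr1
  have hsne : (1 - r) * (1 + ((p : ℝ) - 1) * r) ≠ 0 := ne_of_gt hs
  ext i j
  simp only [Matrix.mul_apply, unifMat, uB, Matrix.one_apply]
  set s := (1 - r) * (1 + ((p : ℝ) - 1) * r) with hsdef
  set a := (1 + ((p : ℝ) - 2) * r) / s with hadef
  set b := -r / s with hbdef
  have key : ∀ k : Fin p, (if i = k then (1 : ℝ) else r) * (if k = j then a else b)
      = r * b + (if k = j then r * (a - b) else 0) + (if i = k then (1 - r) * b else 0)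
        + (if i = k then (if k = j then (1 - r) * (a - b) else 0) else 0) := by
    intro k; split_ifs <;> ring
  rw [Finset.sum_congr rfl (fun k _ => key k)]
  simp only [Finset.sum_add_distrib, Finset.sum_const, Finset.card_univ, Fintype.card_fin,
    Finset.sum_ite_eq, Finset.sum_ite_eq', Finset.mem_univ, if_true, nsmul_eq_mul]
  have ha : a = (1 + ((p : ℝ) - 2) * r) / s := hadef
  have hb : b = -r / s := hbdef
  split_ifs with h
  · rw [ha, hb]; field_simp; ring
  · rw [ha, hb]; field_simp; ring

lemma unifMat_inv (p : ℕ) (r : ℝ) (hp : 2 ≤ p) (hr0 : 0 < r) (hr1 : r < 1) :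
    (unifMat p r)⁻¹ = uB p r :=
  inv_eq_right_inv (unifMat_mul_uB p r hp hr0 hr1)

lemma Qform_eq (p : ℕ) (r : ℝ) (hp : 2 ≤ p) (hr0 : 0 < r) (hr1 : r < 1) (w : Fin p → ℝ) :
    Qform p r w = (-r / ((1 - r) * (1 + ((p : ℝ) - 1) * r))) * (∑ i, w i) ^ 2
      + ((1 + ((p : ℝ) - 2) * r) / ((1 - r) * (1 + ((p : ℝ) - 1) * r))
          - (-r / ((1 - r) * (1 + ((p : ℝ) - 1) * r)))) * (∑ i, (w i) ^ 2) := by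
  set s := (1 - r) * (1 + ((p : ℝ) - 1) * r) with hsdef
  set a := (1 + ((p : ℝ) - 2) * r) / s with hadef
  set b := -r / s with hbdef
  unfold Qform
  rw [unifMat_inv p r hp hr0 hr1]
  simp only [dotProduct, mulVec, dotProduct, uB]
  have key : ∀ i : Fin p, ∑ j, (if i = j then a else b) * w j
      = b * (∑ j, w j) + (a - b) * w i := by
    intro i
    have : ∀ j : Fin p, (if i = j then a else b) * w j
        = b * w j + (if i = j then (a - b) * w j else 0) := by
      intro j; split_ifs <;> ring
    rw [Finset.sum_congr rfl (fun j _ => this j)]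
    simp [Finset.sum_add_distrib, Finset.mul_sum]
  rw [Finset.sum_congr rfl (fun i _ => by rw [key i])]
  rw [Finset.sum_congr rfl (fun i _ => (by ring :
    w i * (b * (∑ j, w j) + (a - b) * w i)
      = b * (∑ j, w j) * w i + (a - b) * (w i) ^ 2))]
  rw [Finset.sum_add_distrib, ← Finset.mul_sum, ← Finset.mul_sum]
  ring

/-- replacing a weight vector `w'` by its componentwise absolute
value never increases the estimator variance: `Q(|w'|, r) ≤ Q(w', r)`. -/
theorem Qform_abs_le (p : ℕ) (hp : 2 ≤ p) (r : ℝ) (hr0 : 0 < r) (hr1 : r < 1)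
    (w' : Fin p → ℝ) :
    Qform p r (fun i => |w' i|) ≤ Qform p r w' := by
  have hs := unif_denom_pos p r hp hr0 hr1
  rw [Qform_eq p r hp hr0 hr1, Qform_eq p r hp hr0 hr1]
  have hsq : (∑ i, |w' i| ^ 2) = ∑ i, (w' i) ^ 2 := by
    apply Finset.sum_congr rfl; intro i _; exact sq_abs _
  rw [hsq]
  have hb : -r / ((1 - r) * (1 + ((p : ℝ) - 1) * r)) < 0 := by
    apply div_neg_of_neg_of_pos <;> linarith
  have habs : |∑ i, w' i| ≤ ∑ i, |w' i| := Finset.abs_sum_le_sum_abs _ _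
  have hT : 0 ≤ ∑ i, |w' i| := Finset.sum_nonneg fun i _ => abs_nonneg _
  have hle : (∑ i, w' i) ^ 2 ≤ (∑ i, |w' i|) ^ 2 := by
    have := abs_le.mp (le_trans (le_refl _) habs)
    · exact sq_le_sq' (by linarith [this.1]) this.2
  nlinarith [mul_le_mul_of_nonpos_left hle (le_of_lt hb)]
end

section
/- Let p ≥ 2 be an integer, r a real number with 0 < r < 1, and s ∈ ℝ^p with sᵢ > 0 for all i; let s_min = minᵢ sᵢ. For every vector w ∈ ℝ^p with Σᵢ |wᵢ| = 1, one has Q_S(w,r) ≤ (1+(p−2)r)/(D(p,r) · s_min²), and equality holds for w = e_{j₀}, a standard basis vector at any index j₀ with s_{j₀} = s_min; that is, among all normalized group effects of the general uniform model, the hardest to estimate is the individual effect of the variable with the smallest variability, with estimator variance (1+(p−2)r)/(D(p,r)·s_min²). -/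
/-!
Since `A(p,r) = (1 - r) I + r J` with `J` the all-ones matrix and `J² = p J`, one has
`A(p,r)⁻¹ = (1 - r)⁻¹ (I - κ J)` with `κ = r / (1 + (p - 1) r)`, so for `v = S⁻¹ w`
`Q_S(w,r) = (‖v‖₂² - κ (Σ vᵢ)²) / (1 - r)`. From `(Σ vᵢ)² ≥ 2 ‖v‖₂² - ‖v‖₁²` and `‖v‖₂ ≤ ‖v‖₁`,
for `0 ≤ κ ≤ 1/2` the numerator is at most `(1 - κ) ‖v‖₁²`, and `‖v‖₁ ≤ ‖w‖₁ / s_min`.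
Both inequalities are equalities for `v` a multiple of a basis vector.
-/

open Matrix

/-- `Q_S(w,r) = wᵀ S⁻¹ A(p,r)⁻¹ S⁻¹ w` with `S = diag s`. -/
noncomputable def QSform (p : ℕ) (r : ℝ) (s w : Fin p → ℝ) : ℝ :=
  (fun i => w i / s i) ⬝ᵥ (unifMat p r)⁻¹.mulVec (fun i => w i / s i)

open Finset

namespace Matrix

variable {l m n R : Type*} [Fintype n]

lemma of_one_mulVec [NonAssocSemiring R] (v : n → R) :
    (of 1 : Matrix m n R) *ᵥ v = fun _ => ∑ i, v i := by
  ext; simp [mulVec, dotProduct]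

lemma dotProduct_of_one_mulVec [CommSemiring R] (v : n → R) :
    v ⬝ᵥ (of 1 *ᵥ v) = (∑ i, v i) ^ 2 := by
  simp [of_one_mulVec, dotProduct, sq, sum_mul]

lemma of_one_mul_of_one [NonAssocSemiring R] :
    (of 1 : Matrix l n R) * (of 1 : Matrix n m R) = (Fintype.card n : R) • of 1 := by
  ext; simp [mul_apply]

lemma inv_smul_one_add_smul_of_one [DecidableEq n] {K : Type*} [Field K] {α β : K} (hα : α ≠ 0)
    (hαβ : α + Fintype.card n * β ≠ 0) :
    (α • 1 + β • of 1 : Matrix n n K)⁻¹ =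
      α⁻¹ • (1 - (β / (α + Fintype.card n * β)) • of 1) := by
  refine inv_eq_right_inv ?_
  set c := β / (α + Fintype.card n * β)
  calc (α • 1 + β • of 1) * (α⁻¹ • (1 - c • of 1))
      = (1 : Matrix n n K) + (α⁻¹ * (β - c * (α + Fintype.card n * β))) • of 1 := by
        simp only [mul_smul_comm, mul_sub, add_mul, smul_mul_assoc, one_mul, mul_one,
          of_one_mul_of_one, smul_smul]
        match_scalars <;> field_simp
    _ = 1 := by rw [div_mul_cancel₀ _ hαβ, sub_self, mul_zero, zero_smul, add_zero]

end Matrix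

lemma two_mul_sum_sq_le_sq_sum_add_sq_sum_abs {ι : Type*} (s : Finset ι) (v : ι → ℝ) :
    2 * ∑ i ∈ s, v i ^ 2 ≤ (∑ i ∈ s, v i) ^ 2 + (∑ i ∈ s, |v i|) ^ 2 := by
  rw [sq, sq, sum_mul_sum, sum_mul_sum, ← sum_add_distrib, mul_sum]
  refine sum_le_sum fun i hi => ?_
  rw [← sum_add_distrib]
  have hterm : ∀ j ∈ s, 0 ≤ v i * v j + |v i| * |v j| := fun j _ => by
    rw [← abs_mul]; exact neg_le_iff_add_nonneg.mp (neg_abs_le _)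
  calc 2 * v i ^ 2 = v i * v i + |v i| * |v i| := by rw [abs_mul_abs_self]; ring
    _ ≤ ∑ j ∈ s, (v i * v j + |v i| * |v j|) := single_le_sum hterm hi

lemma sum_sq_sub_mul_sq_sum_le {ι : Type*} (s : Finset ι) (v : ι → ℝ) {κ : ℝ}
    (hκ₀ : 0 ≤ κ) (hκ : κ ≤ 1 / 2) :
    ∑ i ∈ s, v i ^ 2 - κ * (∑ i ∈ s, v i) ^ 2 ≤ (1 - κ) * (∑ i ∈ s, |v i|) ^ 2 := by
  have hdiag : ∑ i ∈ s, v i ^ 2 ≤ (∑ i ∈ s, |v i|) ^ 2 := by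
    simpa only [sq_abs] using sum_sq_le_sq_sum_of_nonneg fun i _ => abs_nonneg (v i)
  nlinarith [two_mul_sum_sq_le_sq_sum_add_sq_sum_abs s v]

lemma unifMat_eq (p : ℕ) (r : ℝ) : unifMat p r = (1 - r) • 1 + r • of 1 := by
  ext i j
  by_cases h : i = j <;> simp [unifMat, one_apply, h]

lemma QSform_eq {p : ℕ} {r : ℝ} (hr : r ≠ 1) (hpr : 1 - r + p * r ≠ 0) (s w : Fin p → ℝ) :
    QSform p r s w = (1 - r)⁻¹ *
      (∑ i, (w i / s i) ^ 2 - r / (1 - r + p * r) * (∑ i, w i / s i) ^ 2) := by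
  rw [QSform, unifMat_eq, inv_smul_one_add_smul_of_one (sub_ne_zero.mpr hr.symm)
    (by simpa using hpr), smul_mulVec, dotProduct_smul, sub_mulVec, dotProduct_sub, smul_mulVec,
    dotProduct_smul, one_mulVec, dotProduct_of_one_mulVec, Fintype.card_fin]
  simp [dotProduct, sq]

lemma sum_abs_div_le {ι : Type*} (t : Finset ι) {s w : ι → ℝ} {m : ℝ} (hm : 0 < m)
    (hs : ∀ i ∈ t, m ≤ s i) : ∑ i ∈ t, |w i / s i| ≤ (∑ i ∈ t, |w i|) / m := by
  rw [sum_div]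
  refine sum_le_sum fun i hi => ?_
  rw [abs_div, abs_of_pos (hm.trans_le (hs i hi))]
  exact div_le_div_of_nonneg_left (abs_nonneg _) hm (hs i hi)

/-- let `j₀` be any index attaining the minimal variability
`s_min = s j₀ = minᵢ sᵢ`. Over all normalized group effects (`Σᵢ |wᵢ| = 1`),
the variance `Q_S(w,r)` is at most `(1+(p−2)r)/(D(p,r)·s_min²)`, with equality
at the standard basis vector `e_{j₀}`: the individual effect of the variable
with the smallest variability is the hardest to estimate. -/
theorem QS_hardest_is_min_variability (p : ℕ) (hp : 2 ≤ p) (r : ℝ)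
    (hr0 : 0 < r) (hr1 : r < 1) (s : Fin p → ℝ) (hs : ∀ i, 0 < s i)
    (j₀ : Fin p) (hj₀ : ∀ i, s j₀ ≤ s i) :
    (∀ w : Fin p → ℝ, (∑ i, |w i|) = 1 →
      QSform p r s w ≤
        (1 + ((p : ℝ) - 2) * r) /
          ((1 + ((p : ℝ) - 2) * r - ((p : ℝ) - 1) * r ^ 2) * (s j₀) ^ 2)) ∧
    QSform p r s (fun i => if i = j₀ then 1 else 0) =
      (1 + ((p : ℝ) - 2) * r) /
        ((1 + ((p : ℝ) - 2) * r - ((p : ℝ) - 1) * r ^ 2) * (s j₀) ^ 2) := by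
  have hp' : (2 : ℝ) ≤ p := by exact_mod_cast hp
  have hr : 0 < 1 - r := sub_pos.mpr hr1
  have hpr : 0 < 1 - r + p * r := by nlinarith
  set κ := r / (1 - r + p * r) with hκ_def
  have hκ : κ ≤ 1 / 2 := by rw [div_le_iff₀ hpr]; nlinarith
  have hvalue : (1 - r)⁻¹ * ((1 - κ) * (1 / s j₀) ^ 2) = (1 + ((p : ℝ) - 2) * r) /
      ((1 + ((p : ℝ) - 2) * r - ((p : ℝ) - 1) * r ^ 2) * (s j₀) ^ 2) := by
    have hs₀ := (hs j₀).ne'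
    rw [show 1 + ((p : ℝ) - 2) * r - ((p : ℝ) - 1) * r ^ 2 = (1 - r) * (1 - r + p * r) by ring,
      hκ_def]
    field_simp
    ring
  refine ⟨fun w hw => ?_, ?_⟩
  · rw [QSform_eq hr1.ne hpr.ne', ← hvalue]
    have hU : ∑ i, |w i / s i| ≤ 1 / s j₀ :=
      hw ▸ sum_abs_div_le univ (hs j₀) fun i _ => hj₀ i
    gcongr
    calc _ ≤ (1 - κ) * (∑ i, |w i / s i|) ^ 2 := sum_sq_sub_mul_sq_sum_le _ _ (by positivity) hκ
      _ ≤ (1 - κ) * (1 / s j₀) ^ 2 := by gcongr; linarith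
  · rw [QSform_eq hr1.ne hpr.ne', ← hvalue]
    congr 1
    simp only [ite_div, one_div, zero_div, ite_pow, inv_pow, ne_eq, OfNat.ofNat_ne_zero,
      not_false_eq_true, zero_pow, sum_ite_eq', mem_univ, ↓reduceIte]
    ring
end
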